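/- Let a, b ≥ 0 with a² + b² ≥ 2, and let G = mes₂{(φ, ψ) ∈ (-π, π]² : a² sin²(φ/2) + b² sin²(ψ/2) ≤ 1}. Then 8 ≤ (a+1)(b+1)G ≤ 16π². -/

import Mathlib

/-!
Both bounds compare the cap with rectangles centred at the origin. Since `|sin u| ≤ |u|`, each
summand is at most `1/2` on the box `|φ| ≤ √2/(a+1)`, `|ψ| ≤ √2/(b+1)`, which therefore lies in
the cap. Conversely, Jordan's inequality `|φ|/π ≤ |sin (φ/2)|` on `[-π, π]` gives `a|φ| ≤ π` on
the cap, and together with `|φ| ≤ π` this confines the cap to the box `|φ| ≤ 2π/(a+1)`,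
`|ψ| ≤ 2π/(b+1)`.
-/

open Real MeasureTheory Set

theorem sq_mul_sin_half_sq_le_half {t x : ℝ} (ht : 0 ≤ t) (hx : |x| ≤ √2 / (t + 1)) :
    t ^ 2 * sin (x / 2) ^ 2 ≤ 1 / 2 := by
  have htx : t * |x| ≤ √2 := by
    rw [le_div_iff₀' (by positivity)] at hx
    nlinarith [abs_nonneg x]
  calc t ^ 2 * sin (x / 2) ^ 2 ≤ t ^ 2 * (x / 2) ^ 2 :=
        mul_le_mul_of_nonneg_left sin_sq_le_sq (sq_nonneg t)
    _ = (t * |x|) ^ 2 / 4 := by rw [mul_pow, sq_abs]; ring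
    _ ≤ √2 ^ 2 / 4 := by gcongr
    _ = 1 / 2 := by rw [sq_sqrt zero_le_two]; norm_num

theorem abs_mul_le_pi_of_sq_mul_sin_half_sq_le_one {t x : ℝ} (hx : |x| ≤ π)
    (h : t ^ 2 * sin (x / 2) ^ 2 ≤ 1) : |t * x| ≤ π := by
  have jordan : |x| / π ≤ |sin (x / 2)| :=
    calc |x| / π = 2 / π * |x / 2| := by rw [abs_div, abs_two]; field_simp
      _ ≤ |sin (x / 2)| := mul_abs_le_abs_sin (by rw [abs_div, abs_two]; linarith)
  have hts : |t * sin (x / 2)| ≤ 1 := (sq_le_one_iff_abs_le_one _).1 (by rwa [mul_pow])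
  calc |t * x| = π * (|t| * (|x| / π)) := by rw [abs_mul]; field_simp
    _ ≤ π * |t * sin (x / 2)| := by rw [abs_mul]; gcongr
    _ ≤ π := mul_le_of_le_one_right pi_pos.le hts

theorem abs_le_two_pi_div_of_sq_mul_sin_half_sq_le_one {t x : ℝ} (ht : 0 ≤ t) (hx : |x| ≤ π)
    (h : t ^ 2 * sin (x / 2) ^ 2 ≤ 1) : |x| ≤ 2 * π / (t + 1) := by
  have htx := abs_mul_le_pi_of_sq_mul_sin_half_sq_le_one hx h
  rw [abs_mul, abs_of_nonneg ht] at htx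
  rw [le_div_iff₀' (by positivity)]
  linarith

theorem volume_Icc_neg_prod_Icc_neg {r : ℝ} (hr : 0 ≤ r) (s : ℝ) :
    volume (Icc (-r) r ×ˢ Icc (-s) s) = ENNReal.ofReal (4 * r * s) := by
  rw [Measure.volume_eq_prod, Measure.prod_prod, Real.volume_Icc, Real.volume_Icc,
    ← ENNReal.ofReal_mul (by linarith)]
  ring_nf

def capSet (a b : ℝ) : Set (ℝ × ℝ) :=
  {p | p.1 ∈ Ioc (-π) π ∧ p.2 ∈ Ioc (-π) π ∧
    a ^ 2 * sin (p.1 / 2) ^ 2 + b ^ 2 * sin (p.2 / 2) ^ 2 ≤ 1}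

theorem Icc_prod_Icc_subset_capSet {a b : ℝ} (ha : 0 ≤ a) (hb : 0 ≤ b) :
    Icc (-(√2 / (a + 1))) (√2 / (a + 1)) ×ˢ Icc (-(√2 / (b + 1))) (√2 / (b + 1)) ⊆ capSet a b := by
  have sqrt_two_lt_pi : √2 < π := by
    rw [sqrt_lt' pi_pos]
    nlinarith [pi_gt_three]
  have mem_Ioc {t x : ℝ} (ht : 0 ≤ t) (hx : |x| ≤ √2 / (t + 1)) : x ∈ Ioc (-π) π := by
    have : |x| < π :=
      hx.trans_lt ((div_le_self (sqrt_nonneg 2) (by linarith)).trans_lt sqrt_two_lt_pi)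
    exact ⟨by linarith [neg_abs_le x], (le_abs_self x).trans this.le⟩
  rintro ⟨x, y⟩ ⟨hx, hy⟩
  replace hx := abs_le.2 hx
  replace hy := abs_le.2 hy
  exact ⟨mem_Ioc ha hx, mem_Ioc hb hy,
    by linarith [sq_mul_sin_half_sq_le_half ha hx, sq_mul_sin_half_sq_le_half hb hy]⟩

theorem capSet_subset_Icc_prod_Icc {a b : ℝ} (ha : 0 ≤ a) (hb : 0 ≤ b) :
    capSet a b ⊆
      Icc (-(2 * π / (a + 1))) (2 * π / (a + 1)) ×ˢ Icc (-(2 * π / (b + 1))) (2 * π / (b + 1)) := by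
  rintro ⟨x, y⟩ ⟨hx, hy, hcap⟩
  have hx' : 0 ≤ a ^ 2 * sin (x / 2) ^ 2 := by positivity
  have hy' : 0 ≤ b ^ 2 * sin (y / 2) ^ 2 := by positivity
  exact ⟨abs_le.1 (abs_le_two_pi_div_of_sq_mul_sin_half_sq_le_one ha
      (abs_le.2 ⟨hx.1.le, hx.2⟩) (by linarith)),
    abs_le.1 (abs_le_two_pi_div_of_sq_mul_sin_half_sq_le_one hb
      (abs_le.2 ⟨hy.1.le, hy.2⟩) (by linarith))⟩

theorem ofReal_le_volume_capSet {a b : ℝ} (ha : 0 ≤ a) (hb : 0 ≤ b) :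
    ENNReal.ofReal (8 / ((a + 1) * (b + 1))) ≤ volume (capSet a b) :=
  calc ENNReal.ofReal (8 / ((a + 1) * (b + 1)))
      = volume (Icc (-(√2 / (a + 1))) (√2 / (a + 1)) ×ˢ Icc (-(√2 / (b + 1))) (√2 / (b + 1))) := by
        rw [volume_Icc_neg_prod_Icc_neg (by positivity)]
        congr 1
        field_simp
        rw [sq_sqrt zero_le_two]
        ring
    _ ≤ volume (capSet a b) := measure_mono (Icc_prod_Icc_subset_capSet ha hb)

theorem volume_capSet_le {a b : ℝ} (ha : 0 ≤ a) (hb : 0 ≤ b) :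
    volume (capSet a b) ≤ ENNReal.ofReal (16 * π ^ 2 / ((a + 1) * (b + 1))) :=
  calc volume (capSet a b)
      ≤ volume (Icc (-(2 * π / (a + 1))) (2 * π / (a + 1)) ×ˢ
          Icc (-(2 * π / (b + 1))) (2 * π / (b + 1))) :=
        measure_mono (capSet_subset_Icc_prod_Icc ha hb)
    _ = ENNReal.ofReal (16 * π ^ 2 / ((a + 1) * (b + 1))) := by
        rw [volume_Icc_neg_prod_Icc_neg (by positivity)]
        congr 1
        field_simp
        ring

theorem cap_measure_product_bounds_general (a b : ℝ) (ha : 0 ≤ a) (hb : 0 ≤ b) :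
    8 ≤ (a + 1) * (b + 1) *
        (volume {p : ℝ × ℝ | p.1 ∈ Set.Ioc (-π) π ∧ p.2 ∈ Set.Ioc (-π) π ∧
          a ^ 2 * Real.sin (p.1 / 2) ^ 2 + b ^ 2 * Real.sin (p.2 / 2) ^ 2 ≤ 1}).toReal ∧
    (a + 1) * (b + 1) *
        (volume {p : ℝ × ℝ | p.1 ∈ Set.Ioc (-π) π ∧ p.2 ∈ Set.Ioc (-π) π ∧
          a ^ 2 * Real.sin (p.1 / 2) ^ 2 + b ^ 2 * Real.sin (p.2 / 2) ^ 2 ≤ 1}).toReal ≤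
      16 * π ^ 2 := by
  have hab : 0 < (a + 1) * (b + 1) := by positivity
  have hfin : volume (capSet a b) ≠ ⊤ :=
    ne_top_of_le_ne_top ENNReal.ofReal_ne_top (volume_capSet_le ha hb)
  constructor
  · rw [← div_le_iff₀' hab]
    exact (ENNReal.ofReal_le_iff_le_toReal hfin).1 (ofReal_le_volume_capSet ha hb)
  · rw [← le_div_iff₀' hab]
    exact ENNReal.toReal_le_of_le_ofReal (by positivity) (volume_capSet_le ha hb)

theorem cap_measure_product_bounds (a b : ℝ) (ha : 0 ≤ a) (hb : 0 ≤ b)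
    (hab : 2 ≤ a ^ 2 + b ^ 2) :
    8 ≤ (a + 1) * (b + 1) *
        (volume {p : ℝ × ℝ | p.1 ∈ Set.Ioc (-π) π ∧ p.2 ∈ Set.Ioc (-π) π ∧
          a ^ 2 * Real.sin (p.1 / 2) ^ 2 + b ^ 2 * Real.sin (p.2 / 2) ^ 2 ≤ 1}).toReal ∧
    (a + 1) * (b + 1) *
        (volume {p : ℝ × ℝ | p.1 ∈ Set.Ioc (-π) π ∧ p.2 ∈ Set.Ioc (-π) π ∧
          a ^ 2 * Real.sin (p.1 / 2) ^ 2 + b ^ 2 * Real.sin (p.2 / 2) ^ 2 ≤ 1}).toReal ≤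
      16 * π ^ 2 :=
  cap_measure_product_bounds_general a b ha hb
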